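/- Let U ⊆ ℝⁿ be a nonempty open convex set, φ₀ : U → ℝ smooth with positive-definite Hessian, and let g : U × [0,T] → (symmetric positive-definite n×n real matrices) be a smooth solution of the geometric flow ∂_t g_{ij}(x,t) = ∂_i∂_j log det g(x,t) with g_{ij}(·,0) = ∂_i∂_j φ₀. Then the evolved metrics remain Hessian: for every t ∈ [0,T] there is a smooth function ψ_t : U → ℝ with g_{ij}(x,t) = ∂_i∂_j ψ_t(x) for all x ∈ U and all i,j; explicitly, one may take ψ_t(x) = φ₀(x) + t · log det(D²φ₀)(x) + ∫₀ᵗ log( det g(x,s) / det D²φ₀(x) ) ds. -/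

import Mathlib

open Set Matrix

/-- Partial derivative in the `i`-th coordinate direction of a function on `ℝⁿ`. -/
noncomputable def pd (n : ℕ) (i : Fin n) (f : (Fin n → ℝ) → ℝ) (x : Fin n → ℝ) : ℝ :=
  fderiv ℝ f x (Pi.single i 1)

/-!
Since `log (det g / det D²φ₀) = log det g - log det D²φ₀`, the potential is
`ψ_t = φ₀ + ∫₀ᵗ log det g(·, s) ds`. The integrand is jointly smooth on `U × [0, T]`, so one may
differentiate under the integral sign as often as one likes. Hence `ψ_t` is smooth and, by the
flow equation and the fundamental theorem of calculus,
`∂ᵢ∂ⱼψ_t = ∂ᵢ∂ⱼφ₀ + ∫₀ᵗ ∂ₛ g_{ij}(·, s) ds = g_{ij}(·, 0) + (g_{ij}(·, t) - g_{ij}(·, 0))`.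
-/

open Function Filter Topology MeasureTheory intervalIntegral
open scoped Interval

universe u

theorem ContDiffOn.matrix_det {𝕜 E ι : Type*} [NontriviallyNormedField 𝕜] [NormedAddCommGroup E]
    [NormedSpace 𝕜 E] [Fintype ι] [DecidableEq ι] {m : WithTop ℕ∞} {s : Set E}
    {A : E → Matrix ι ι 𝕜} (hA : ∀ i j, ContDiffOn 𝕜 m (fun x => A x i j) s) :
    ContDiffOn 𝕜 m (fun x => (A x).det) s := by
  simp only [Matrix.det_apply']
  exact ContDiffOn.sum fun σ _ => contDiffOn_const.mul (contDiffOn_prod fun i _ => hA (σ i) i)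

theorem ContinuousOn.intervalIntegrable_of_prod {X E : Type*} [TopologicalSpace X]
    [NormedAddCommGroup E] {G : X → ℝ → E} {U : Set X} {a b t : ℝ} {x : X}
    (hG : ContinuousOn (uncurry G) (U ×ˢ Icc a b)) (hx : x ∈ U) (ht : t ∈ Icc a b) :
    IntervalIntegrable (G x) volume a t :=
  ((hG.uncurry_left x hx).mono (Icc_subset_Icc_right ht.2)).intervalIntegrable_of_Icc ht.1

section ParametricIntegral

variable {H : Type u} {E : Type*} [NormedAddCommGroup H] [NormedSpace ℝ H]
  [NormedAddCommGroup E] [NormedSpace ℝ E] {U : Set H} {a b t : ℝ} {x : H}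

theorem ContDiffOn.exists_hasFDerivAt_fst {m k : WithTop ℕ∞} {G : H → ℝ → E}
    (hG : ContDiffOn ℝ k (uncurry G) (U ×ˢ Icc a b)) (hU : IsOpen U) (hab : a < b)
    (hmk : m + 1 ≤ k) :
    ∃ G' : H → ℝ → H →L[ℝ] E, ContDiffOn ℝ m (uncurry G') (U ×ˢ Icc a b) ∧
      ∀ y ∈ U, ∀ s ∈ Icc a b, HasFDerivAt (G · s) (G' y s) y := by
  refine ⟨fun y s => (fderivWithin ℝ (uncurry G) (U ×ˢ Icc a b) (y, s)).comp (.inl ℝ H ℝ),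
    (hG.fderivWithin (hU.uniqueDiffOn.prod (uniqueDiffOn_Icc hab)) hmk).clm_comp
      contDiffOn_const, fun y hy s hs => ?_⟩
  have hGd : HasFDerivWithinAt (uncurry G) (fderivWithin ℝ (uncurry G) (U ×ˢ Icc a b) (y, s))
      (U ×ˢ Icc a b) (y, s) :=
    (hG.differentiableOn (zero_lt_one.trans_le (le_add_self.trans hmk)).ne' (y, s)
      ⟨hy, hs⟩).hasFDerivWithinAt
  exact (hGd.comp y ((hasFDerivAt_prodMk_left (𝕜 := ℝ) y s).hasFDerivWithinAt (s := U))
    fun z hz => show (z, s) ∈ U ×ˢ Icc a b from ⟨hz, hs⟩).hasFDerivAt (hU.mem_nhds hy)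

theorem hasFDerivAt_intervalIntegral_of_continuousOn [ProperSpace H] [CompleteSpace E]
    {G : H → ℝ → E} {G' : H → ℝ → H →L[ℝ] E} (hU : IsOpen U)
    (hG : ContinuousOn (uncurry G) (U ×ˢ Icc a b)) (hG' : ContinuousOn (uncurry G') (U ×ˢ Icc a b))
    (hder : ∀ y ∈ U, ∀ s ∈ Icc a b, HasFDerivAt (G · s) (G' y s) y)
    (ht : t ∈ Icc a b) (hx : x ∈ U) :
    HasFDerivAt (fun y => ∫ s in a..t, G y s) (∫ s in a..t, G' x s) x := by
  obtain ⟨ε, hε, hball⟩ : ∃ ε > 0, Metric.closedBall x ε ⊆ U :=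
    Metric.nhds_basis_closedBall.mem_iff.1 (hU.mem_nhds hx)
  have hΙ : Ι a t ⊆ Icc a b := by
    rw [uIoc_of_le ht.1]
    exact Ioc_subset_Icc_self.trans (Icc_subset_Icc_right ht.2)
  -- a bound of `G'` on the compact set `closedBall x ε ×ˢ Icc a b` dominates the derivatives
  obtain ⟨C, hC⟩ := ((isCompact_closedBall x ε).prod isCompact_Icc).exists_bound_of_continuousOn
    (hG'.mono (prod_mono hball Subset.rfl))
  refine hasFDerivAt_integral_of_dominated_of_fderiv_le (bound := fun _ => C)
    (Metric.ball_mem_nhds x hε) ?_ (hG.intervalIntegrable_of_prod hx ht) ?_ ?_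
    intervalIntegrable_const ?_
  · exact eventually_of_mem (hU.mem_nhds hx) fun y hy =>
      ((hG.uncurry_left y hy).mono hΙ).aestronglyMeasurable measurableSet_uIoc
  · exact ((hG'.uncurry_left x hx).mono hΙ).aestronglyMeasurable measurableSet_uIoc
  · exact .of_forall fun s hs y hy => hC (y, s) ⟨Metric.ball_subset_closedBall hy, hΙ hs⟩
  · exact .of_forall fun s hs y hy => hder y (hball (Metric.ball_subset_closedBall hy)) s (hΙ hs)

-- `F` lives in the universe of `H`, so that the induction can pass to `H →L[ℝ] F`.
theorem contDiffOn_intervalIntegral [ProperSpace H] {F : Type u} [NormedAddCommGroup F]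
    [NormedSpace ℝ F] [CompleteSpace F] {G : H → ℝ → F}
    (hG : ContDiffOn ℝ (⊤ : ℕ∞) (uncurry G) (U ×ˢ Icc a b)) (hU : IsOpen U) (hab : a < b)
    (ht : t ∈ Icc a b) :
    ContDiffOn ℝ (⊤ : ℕ∞) (fun y => ∫ s in a..t, G y s) U := by
  rw [contDiffOn_infty]
  intro k
  obtain ⟨G', hG', hder⟩ := hG.exists_hasFDerivAt_fst (m := (⊤ : ℕ∞)) hU hab (le_of_eq rfl)
  have hint : ∀ y ∈ U, HasFDerivAt (fun z => ∫ s in a..t, G z s) (∫ s in a..t, G' y s) y :=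
    fun y hy => hasFDerivAt_intervalIntegral_of_continuousOn hU hG.continuousOn hG'.continuousOn
      hder ht hy
  induction k generalizing F with
  | zero =>
    exact contDiffOn_zero.2 fun y hy => (hint y hy).continuousAt.continuousWithinAt
  | succ k ih =>
    rw [Nat.cast_succ, contDiffOn_succ_iff_fderiv_of_isOpen hU]
    refine ⟨fun y hy => (hint y hy).differentiableAt.differentiableWithinAt, by simp, ?_⟩
    obtain ⟨G'', hG'', hder'⟩ := hG'.exists_hasFDerivAt_fst (m := (⊤ : ℕ∞)) hU hab (le_of_eq rfl)
    exact (ih hG' G'' hG'' hder' fun y hy => hasFDerivAt_intervalIntegral_of_continuousOn hU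
      hG'.continuousOn hG''.continuousOn hder' ht hy).congr fun y hy => (hint y hy).fderiv

end ParametricIntegral

section PartialDerivative

variable {n : ℕ} {U : Set (Fin n → ℝ)} {x : Fin n → ℝ}

theorem HasFDerivAt.pd_eq {f : (Fin n → ℝ) → ℝ} {f' : (Fin n → ℝ) →L[ℝ] ℝ}
    (hf : HasFDerivAt f f' x) (i : Fin n) : pd n i f x = f' (Pi.single i 1) := by
  rw [pd, hf.fderiv]

theorem Filter.EventuallyEq.pd_eq {f f' : (Fin n → ℝ) → ℝ} (h : f =ᶠ[𝓝 x] f') (i : Fin n) :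
    pd n i f x = pd n i f' x := by
  rw [pd, pd, h.fderiv_eq]

theorem Filter.EventuallyEq.pd_pd_eq {f f' : (Fin n → ℝ) → ℝ} (h : f =ᶠ[𝓝 x] f') (i j : Fin n) :
    pd n i (pd n j f) x = pd n i (pd n j f') x := by
  have hj : pd n j f =ᶠ[𝓝 x] pd n j f' := h.eventuallyEq_nhds.mono fun _ hy => hy.pd_eq j
  exact hj.pd_eq i

theorem ContDiffOn.pd_of_isOpen {m k : WithTop ℕ∞} {f : (Fin n → ℝ) → ℝ} (hf : ContDiffOn ℝ k f U)
    (hU : IsOpen U) (hmk : m + 1 ≤ k) (i : Fin n) : ContDiffOn ℝ m (pd n i f) U :=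
  (hf.fderiv_of_isOpen hU hmk).clm_apply contDiffOn_const

theorem pd_add {f h : (Fin n → ℝ) → ℝ} (hf : DifferentiableAt ℝ f x)
    (hh : DifferentiableAt ℝ h x) (i : Fin n) :
    pd n i (fun y => f y + h y) x = pd n i f x + pd n i h x := by
  rw [pd, fderiv_fun_add hf hh]
  rfl

theorem pd_pd_add {f h : (Fin n → ℝ) → ℝ} (hU : IsOpen U) (hf : ContDiffOn ℝ 2 f U)
    (hh : ContDiffOn ℝ 2 h U) (hx : x ∈ U) (i j : Fin n) :
    pd n i (pd n j fun y => f y + h y) x = pd n i (pd n j f) x + pd n i (pd n j h) x := by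
  have hdiff {k : (Fin n → ℝ) → ℝ} (hk : ContDiffOn ℝ 1 k U) {y : Fin n → ℝ} (hy : y ∈ U) :
      DifferentiableAt ℝ k y :=
    (hk.contDiffAt (hU.mem_nhds hy)).differentiableAt one_ne_zero
  have hsum : pd n j (fun y => f y + h y) =ᶠ[𝓝 x] fun y => pd n j f y + pd n j h y :=
    eventually_of_mem (hU.mem_nhds hx) fun y hy =>
      pd_add (hdiff (hf.of_le one_le_two) hy) (hdiff (hh.of_le one_le_two) hy) j
  rw [hsum.pd_eq,
    pd_add (hdiff (hf.pd_of_isOpen hU le_rfl j) hx) (hdiff (hh.pd_of_isOpen hU le_rfl j) hx)]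

variable {a b t : ℝ} {G : (Fin n → ℝ) → ℝ → ℝ}

theorem ContDiffOn.pd_fst {m k : WithTop ℕ∞} (hG : ContDiffOn ℝ k (uncurry G) (U ×ˢ Icc a b))
    (hU : IsOpen U) (hab : a < b) (hmk : m + 1 ≤ k) (i : Fin n) :
    ContDiffOn ℝ m (uncurry fun y s => pd n i (G · s) y) (U ×ˢ Icc a b) := by
  obtain ⟨G', hG', hder⟩ := hG.exists_hasFDerivAt_fst hU hab hmk
  exact (hG'.clm_apply contDiffOn_const).congr fun p hp => (hder p.1 hp.1 p.2 hp.2).pd_eq i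

theorem pd_intervalIntegral (hG : ContDiffOn ℝ 1 (uncurry G) (U ×ˢ Icc a b)) (hU : IsOpen U)
    (hab : a < b) (ht : t ∈ Icc a b) (hx : x ∈ U) (i : Fin n) :
    pd n i (fun y => ∫ s in a..t, G y s) x = ∫ s in a..t, pd n i (G · s) x := by
  obtain ⟨G', hG', hder⟩ := hG.exists_hasFDerivAt_fst (m := 0) hU hab le_rfl
  rw [(hasFDerivAt_intervalIntegral_of_continuousOn hU hG.continuousOn hG'.continuousOn hder ht
    hx).pd_eq, ContinuousLinearMap.intervalIntegral_apply
    (hG'.continuousOn.intervalIntegrable_of_prod hx ht)]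
  refine integral_congr fun s hs => ((hder x hx s ?_).pd_eq i).symm
  rw [uIcc_of_le ht.1] at hs
  exact Icc_subset_Icc_right ht.2 hs

theorem pd_pd_intervalIntegral (hG : ContDiffOn ℝ 2 (uncurry G) (U ×ˢ Icc a b)) (hU : IsOpen U)
    (hab : a < b) (ht : t ∈ Icc a b) (hx : x ∈ U) (i j : Fin n) :
    pd n i (pd n j fun y => ∫ s in a..t, G y s) x = ∫ s in a..t, pd n i (pd n j (G · s)) x := by
  have hj : (pd n j fun y => ∫ s in a..t, G y s) =ᶠ[𝓝 x]
      fun y => ∫ s in a..t, pd n j (G · s) y :=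
    eventually_of_mem (hU.mem_nhds hx) fun y hy =>
      pd_intervalIntegral (hG.of_le one_le_two) hU hab ht hy j
  rw [hj.pd_eq i, pd_intervalIntegral (hG.pd_fst (m := 1) hU hab le_rfl j) hU hab ht hx i]

end PartialDerivative

theorem sub_eq_intervalIntegral_of_hasDerivWithinAt {f f' : ℝ → ℝ} {a b t : ℝ}
    (hf : ∀ s ∈ Icc a b, HasDerivWithinAt f (f' s) (Icc a b) s) (hf' : ContinuousOn f' (Icc a b))
    (ht : t ∈ Icc a b) : f t - f a = ∫ s in a..t, f' s := by
  have hsub : Icc a t ⊆ Icc a b := Icc_subset_Icc_right ht.2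
  refine (integral_eq_sub_of_hasDerivAt_of_le ht.1
    (fun s hs => (hf s (hsub hs)).continuousWithinAt.mono hsub) (fun s hs => ?_)
    ((hf'.mono hsub).intervalIntegrable_of_Icc ht.1)).symm
  exact (hf s (hsub (Ioo_subset_Icc_self hs))).hasDerivAt
    (Icc_mem_nhds hs.1 (hs.2.trans_le ht.2))

theorem stmt12_general
    (n : ℕ) (U : Set (Fin n → ℝ)) (hU : IsOpen U)
    (T : ℝ) (hT : 0 < T)
    -- `φ₀` smooth with positive-definite Hessian on `U`
    (φ₀ : (Fin n → ℝ) → ℝ)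
    (hφ₀ : ContDiffOn ℝ (⊤ : ℕ∞) φ₀ U)
    (hφ₀pos : ∀ x ∈ U, (Matrix.of (fun i j : Fin n => pd n i (pd n j φ₀) x)).PosDef)
    -- `g` a smooth solution of the geometric flow on `U × [0,T]`
    (g : ℝ → (Fin n → ℝ) → Matrix (Fin n) (Fin n) ℝ)
    (hsmooth : ∀ i j : Fin n, ContDiffOn ℝ (⊤ : ℕ∞)
      (fun p : (Fin n → ℝ) × ℝ => g p.2 p.1 i j) (U ×ˢ Icc 0 T))
    (hpos : ∀ t ∈ Icc (0:ℝ) T, ∀ x ∈ U, (g t x).PosDef)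
    (hflow : ∀ x ∈ U, ∀ t ∈ Icc (0:ℝ) T, ∀ i j : Fin n,
      HasDerivWithinAt (fun s => g s x i j)
        (pd n i (pd n j (fun y => Real.log (g t y).det)) x) (Icc 0 T) t)
    -- initial value `g_{ij}(·,0) = ∂_i∂_j φ₀`
    (hinit : ∀ x ∈ U, ∀ i j : Fin n, g 0 x i j = pd n i (pd n j φ₀) x)
    -- the explicit potential `ψ_t`
    (ψ : ℝ → (Fin n → ℝ) → ℝ)
    (hψ : ∀ t x, ψ t x = φ₀ x
      + t * Real.log (Matrix.of (fun i j : Fin n => pd n i (pd n j φ₀) x)).det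
      + ∫ s in (0:ℝ)..t, Real.log ((g s x).det
          / (Matrix.of (fun i j : Fin n => pd n i (pd n j φ₀) x)).det)) :
    -- the evolved metrics remain Hessian, with potential `ψ_t`
    ∀ t ∈ Icc (0:ℝ) T,
      ContDiffOn ℝ (⊤ : ℕ∞) (ψ t) U ∧
      ∀ x ∈ U, ∀ i j : Fin n, g t x i j = pd n i (pd n j (ψ t)) x := by
  set F : (Fin n → ℝ) → ℝ → ℝ := fun y s => Real.log (g s y).det
  have hF : ContDiffOn ℝ (⊤ : ℕ∞) (uncurry F) (U ×ˢ Icc 0 T) :=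
    (ContDiffOn.matrix_det hsmooth).log fun p hp => (hpos p.2 hp.2 p.1 hp.1).det_pos.ne'
  have hF2 : ContDiffOn ℝ 2 (uncurry F) (U ×ˢ Icc 0 T) := hF.of_le ENat.LEInfty.out
  intro t ht
  have hψF : EqOn (ψ t) (fun y => φ₀ y + ∫ s in (0:ℝ)..t, F y s) U := by
    intro y hy
    rw [hψ]
    set c := (Matrix.of fun i j : Fin n => pd n i (pd n j φ₀) y).det
    have hlog : EqOn (fun s => Real.log ((g s y).det / c)) (fun s => F y s - Real.log c)
        (uIcc 0 t) := fun s hs => by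
      rw [uIcc_of_le ht.1] at hs
      exact Real.log_div (hpos s (Icc_subset_Icc_right ht.2 hs) y hy).det_pos.ne'
        (hφ₀pos y hy).det_pos.ne'
    rw [integral_congr hlog, integral_sub (hF.continuousOn.intervalIntegrable_of_prod hy ht)
      intervalIntegrable_const, intervalIntegral.integral_const, smul_eq_mul, sub_zero]
    ring
  have hΦ := contDiffOn_intervalIntegral hF hU hT ht
  refine ⟨(hφ₀.add hΦ).congr hψF, fun x hx i j => ?_⟩
  have hFTC : g t x i j - g 0 x i j = ∫ s in (0:ℝ)..t, pd n i (pd n j (F · s)) x :=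
    sub_eq_intervalIntegral_of_hasDerivWithinAt (fun s hs => hflow x hx s hs i j)
      (((hF2.pd_fst (m := 1) hU hT le_rfl j).pd_fst (m := 0) hU hT le_rfl
        i).continuousOn.uncurry_left x hx) ht
  rw [(hψF.eventuallyEq_of_mem (hU.mem_nhds hx)).pd_pd_eq,
    pd_pd_add hU (hφ₀.of_le ENat.LEInfty.out) (hΦ.of_le ENat.LEInfty.out) hx,
    pd_pd_intervalIntegral hF2 hU hT ht hx, ← hFTC, hinit x hx]
  ring

/-- along the geometric flow `∂_t g_{ij} = ∂_i∂_j log det g` starting from a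
Hessian metric `g(·,0) = D²φ₀` on an open convex set, the evolved metrics remain Hessian:
for each `t`, the explicit potential
`ψ_t(x) = φ₀(x) + t log det D²φ₀(x) + ∫₀ᵗ log (det g(x,s) / det D²φ₀(x)) ds`
is smooth and satisfies `g_{ij}(x,t) = ∂_i∂_j ψ_t(x)`. -/
theorem stmt12
    (n : ℕ) (hn : 1 ≤ n) (U : Set (Fin n → ℝ)) (hU : IsOpen U) (hUconv : Convex ℝ U)
    (hUne : U.Nonempty)
    (T : ℝ) (hT : 0 < T)
    -- `φ₀` smooth with positive-definite Hessian on `U`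
    (φ₀ : (Fin n → ℝ) → ℝ)
    (hφ₀ : ContDiffOn ℝ (⊤ : ℕ∞) φ₀ U)
    (hφ₀pos : ∀ x ∈ U, (Matrix.of (fun i j : Fin n => pd n i (pd n j φ₀) x)).PosDef)
    -- `g` a smooth solution of the geometric flow on `U × [0,T]`
    (g : ℝ → (Fin n → ℝ) → Matrix (Fin n) (Fin n) ℝ)
    (hsmooth : ∀ i j : Fin n, ContDiffOn ℝ (⊤ : ℕ∞)
      (fun p : (Fin n → ℝ) × ℝ => g p.2 p.1 i j) (U ×ˢ Icc 0 T))
    (hpos : ∀ t ∈ Icc (0:ℝ) T, ∀ x ∈ U, (g t x).PosDef)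
    (hflow : ∀ x ∈ U, ∀ t ∈ Icc (0:ℝ) T, ∀ i j : Fin n,
      HasDerivWithinAt (fun s => g s x i j)
        (pd n i (pd n j (fun y => Real.log (g t y).det)) x) (Icc 0 T) t)
    -- initial value `g_{ij}(·,0) = ∂_i∂_j φ₀`
    (hinit : ∀ x ∈ U, ∀ i j : Fin n, g 0 x i j = pd n i (pd n j φ₀) x)
    -- the explicit potential `ψ_t`
    (ψ : ℝ → (Fin n → ℝ) → ℝ)
    (hψ : ∀ t x, ψ t x = φ₀ x
      + t * Real.log (Matrix.of (fun i j : Fin n => pd n i (pd n j φ₀) x)).det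
      + ∫ s in (0:ℝ)..t, Real.log ((g s x).det
          / (Matrix.of (fun i j : Fin n => pd n i (pd n j φ₀) x)).det)) :
    -- the evolved metrics remain Hessian, with potential `ψ_t`
    ∀ t ∈ Icc (0:ℝ) T,
      ContDiffOn ℝ (⊤ : ℕ∞) (ψ t) U ∧
      ∀ x ∈ U, ∀ i j : Fin n, g t x i j = pd n i (pd n j (ψ t)) x :=
  stmt12_general n U hU T hT φ₀ hφ₀ hφ₀pos g hsmooth hpos hflow hinit ψ hψ
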